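/- Let x_0,x_1,... and y_0,y_1,... be sequences of (not necessarily commuting) indeterminates that commute with words over {a,b}, and let m be a positive integer. Then Σ_{k=1}^{m-1} x_k y_{m-k} [b(ab)^{k-1} ⧢ b(ab)^{m-k-1}] = (1/2) Σ_{n=1}^{⌊m/2⌋} 4^n Σ_{j=0}^{m-2n} binom(m-2n, j) x_{n+j} y_{m-n-j} U_{m,n}. -/

import Mathlib

/-- The two-letter alphabet `{a, b}`. -/
inductive AB : Type
  | a : AB
  | b : AB
  deriving DecidableEq

/-- The shuffle product of two words, as a rational linear combination of
words, defined by the recursion `1 ⧢ w = w ⧢ 1 = w` and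
`xu ⧢ yv = x(u ⧢ yv) + y(xu ⧢ v)`. -/
noncomputable def shuffleWord {A : Type*} : List A → List A → (List A →₀ ℚ)
  | [], w => Finsupp.single w 1
  | u, [] => Finsupp.single u 1
  | x :: u, y :: v =>
      Finsupp.mapDomain (List.cons x) (shuffleWord u (y :: v)) +
      Finsupp.mapDomain (List.cons y) (shuffleWord (x :: u) v)
  termination_by u v => u.length + v.length
  decreasing_by all_goals simp_wf

/-- The word `(ab)^p`. -/
def abpow (p : ℕ) : List AB := (List.replicate p [AB.a, AB.b]).flatten

/-- The number of occurrences of the subword `a²` in a word. -/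
def countAA : List AB → ℕ
  | AB.a :: AB.a :: t => countAA (AB.a :: t) + 1
  | _ :: t => countAA t
  | [] => 0

/-- The number of occurrences of the subword `b²` in a word. -/
def countBB : List AB → ℕ
  | AB.b :: AB.b :: t => countBB (AB.b :: t) + 1
  | _ :: t => countBB t
  | [] => 0

/-- `T_{m,n}`: for `m ≥ n ≥ 0`, the sum of the distinct words occurring in the
shuffle product `(ab)^n ⧢ (ab)^{m-n}` in which the subword `a²` appears
exactly `n` times; `0` for all other pairs. -/
noncomputable def T (m n : ℕ) : List AB →₀ ℚ :=
  if n ≤ m then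
    ∑ w ∈ (shuffleWord (abpow n) (abpow (m - n))).support.filter
        (fun w => countAA w = n), Finsupp.single w 1
  else 0

/-- `U_{m,n}`: for `m ≥ n + 1 ≥ 2`, the sum of the distinct words arising in
the shuffle product `b(ab)^{n-1} ⧢ b(ab)^{m-n-1}` in which the subword `b²`
occurs exactly `n` times; `0` for all other pairs. -/
noncomputable def U (m n : ℕ) : List AB →₀ ℚ :=
  if 1 ≤ n ∧ n + 1 ≤ m then
    ∑ w ∈ (shuffleWord (AB.b :: abpow (n - 1)) (AB.b :: abpow (m - n - 1))).support.filter
        (fun w => countBB w = n), Finsupp.single w 1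
  else 0


open AB Finset

/-! ### Auxiliary lemmas -/

lemma shuffle_nil_left {A : Type*} (w : List A) : shuffleWord [] w = Finsupp.single w 1 := by
  cases w <;> simp [shuffleWord]

lemma shuffle_nil_right {A : Type*} (w : List A) : shuffleWord w [] = Finsupp.single w 1 := by
  cases w <;> simp [shuffleWord]

lemma shuffle_cons {A : Type*} (x y : A) (u v : List A) :
    shuffleWord (x :: u) (y :: v) =
      Finsupp.mapDomain (List.cons x) (shuffleWord u (y :: v)) +
      Finsupp.mapDomain (List.cons y) (shuffleWord (x :: u) v) := by
  rw [shuffleWord]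

noncomputable def cns (x : AB) : (List AB →₀ ℚ) → (List AB →₀ ℚ) :=
  Finsupp.mapDomain (List.cons x)

lemma cns_def (x : AB) (F : List AB →₀ ℚ) : Finsupp.mapDomain (List.cons x) F = cns x F := rfl

lemma cns_add (x : AB) (F G : List AB →₀ ℚ) : cns x (F + G) = cns x F + cns x G := by
  simp [cns, Finsupp.mapDomain_add]

lemma cns_smul (x : AB) (c : ℚ) (F : List AB →₀ ℚ) : cns x (c • F) = c • cns x F := by
  simp [cns, Finsupp.mapDomain_smul]

lemma cns_zero (x : AB) : cns x (0 : List AB →₀ ℚ) = 0 := by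
  simp [cns, Finsupp.mapDomain_zero]

lemma cns_sum {ι : Type*} (x : AB) (s : Finset ι) (f : ι → (List AB →₀ ℚ)) :
    cns x (∑ i ∈ s, f i) = ∑ i ∈ s, cns x (f i) := by
  classical
  induction s using Finset.induction with
  | empty => simp [cns_zero]
  | insert _ _ h ih => rw [Finset.sum_insert h, Finset.sum_insert h, cns_add, ih]

lemma cns_single (x : AB) (w : List AB) (c : ℚ) :
    cns x (Finsupp.single w c) = Finsupp.single (x :: w) c := by
  simp [cns, Finsupp.mapDomain_single]

lemma cns_apply_cons (x : AB) (F : List AB →₀ ℚ) (u : List AB) :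
    (cns x F) (x :: u) = F u :=
  Finsupp.mapDomain_apply (List.cons_injective) F u

lemma cns_apply_nil (x : AB) (F : List AB →₀ ℚ) : (cns x F) [] = 0 := by
  apply Finsupp.mapDomain_notin_range
  rintro ⟨u, hu⟩
  exact List.cons_ne_nil _ _ hu

lemma cns_apply_ne (x y : AB) (h : y ≠ x) (F : List AB →₀ ℚ) (u : List AB) :
    (cns x F) (y :: u) = 0 := by
  apply Finsupp.mapDomain_notin_range
  rintro ⟨v, hv⟩
  cases hv
  exact h rfl

lemma mem_supp_cns {x : AB} {F : List AB →₀ ℚ} {w : List AB} (h : w ∈ (cns x F).support) :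
    ∃ u, u ∈ F.support ∧ w = x :: u := by
  have := Finsupp.mapDomain_support h
  simp only [Finset.mem_image] at this
  obtain ⟨u, hu, rfl⟩ := this
  exact ⟨u, hu, rfl⟩

lemma countBB_a (t : List AB) : countBB (a :: t) = countBB t := rfl
lemma countBB_bb (t : List AB) : countBB (b :: b :: t) = countBB (b :: t) + 1 := rfl
lemma countBB_ba (t : List AB) : countBB (b :: a :: t) = countBB t := rfl

/-! ### Alternating words and the master shuffle recursions -/

def Bw (k : ℕ) : List AB := AB.b :: abpow k

lemma abpow_zero : abpow 0 = [] := rfl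
lemma abpow_succ' (n : ℕ) : abpow (n+1) = AB.a :: Bw n := rfl

lemma sh_AB (k l : ℕ) : shuffleWord (abpow (k+1)) (Bw l) =
    cns a (shuffleWord (Bw k) (Bw l)) + cns b (shuffleWord (abpow (k+1)) (abpow l)) := by
  show shuffleWord (a :: Bw k) (b :: abpow l) = _
  rw [shuffle_cons, cns_def, cns_def]
  rfl

lemma sh_BA (k l : ℕ) : shuffleWord (Bw k) (abpow (l+1)) =
    cns b (shuffleWord (abpow k) (abpow (l+1))) + cns a (shuffleWord (Bw k) (Bw l)) := by
  show shuffleWord (b :: abpow k) (a :: Bw l) = _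
  rw [shuffle_cons, cns_def, cns_def]
  rfl

lemma masterBB (k l : ℕ) :
    shuffleWord (Bw k) (Bw l) =
      (if k = 0 then 0 else cns b (cns a (shuffleWord (Bw (k-1)) (Bw l)))) +
      (if l = 0 then 0 else cns b (cns a (shuffleWord (Bw k) (Bw (l-1))))) +
      (2:ℚ) • cns b (cns b (shuffleWord (abpow k) (abpow l))) := by
  have e0 : shuffleWord (Bw k) (Bw l) =
      cns b (shuffleWord (abpow k) (Bw l)) + cns b (shuffleWord (Bw k) (abpow l)) := by
    show shuffleWord (b :: abpow k) (b :: abpow l) = _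
    rw [shuffle_cons, cns_def, cns_def]
    rfl
  have h1 : shuffleWord (abpow k) (Bw l) =
      (if k = 0 then 0 else cns a (shuffleWord (Bw (k-1)) (Bw l))) +
      cns b (shuffleWord (abpow k) (abpow l)) := by
    cases k with
    | zero => simp [abpow_zero, shuffle_nil_left, shuffle_nil_right, cns_single, Bw]
    | succ k' => simp only [Nat.succ_ne_zero, if_false, Nat.add_sub_cancel, sh_AB]
  have h2 : shuffleWord (Bw k) (abpow l) =
      cns b (shuffleWord (abpow k) (abpow l)) +
      (if l = 0 then 0 else cns a (shuffleWord (Bw k) (Bw (l-1)))) := by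
    cases l with
    | zero => simp [abpow_zero, shuffle_nil_left, shuffle_nil_right, cns_single, Bw]
    | succ l' => simp only [Nat.succ_ne_zero, if_false, Nat.add_sub_cancel, sh_BA]
  rw [e0, h1, h2, cns_add, cns_add]
  by_cases hk : k = 0 <;> by_cases hl : l = 0 <;>
    simp only [hk, hl, if_true, if_false, two_smul] <;>
    simp [cns, Finsupp.mapDomain_zero] <;> abel

lemma masterAA (k l : ℕ) :
    shuffleWord (abpow (k+1)) (abpow (l+1)) =
      cns a (cns b (shuffleWord (abpow k) (abpow (l+1)))) +
      cns a (cns b (shuffleWord (abpow (k+1)) (abpow l))) +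
      (2:ℚ) • cns a (cns a (shuffleWord (Bw k) (Bw l))) := by
  have e0 : shuffleWord (abpow (k+1)) (abpow (l+1)) =
      cns a (shuffleWord (Bw k) (abpow (l+1))) + cns a (shuffleWord (abpow (k+1)) (Bw l)) := by
    show shuffleWord (a :: Bw k) (a :: Bw l) = _
    rw [shuffle_cons, cns_def, cns_def]
    rfl
  rw [e0, sh_BA, sh_AB, cns_add, cns_add, two_smul]
  abel

/-! ### The structured word families -/

noncomputable def fam : Bool → ℕ → ℕ → (List AB →₀ ℚ)
  | false, 0, 0 => Finsupp.single [] 1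
  | false, 0, (r+1) => cns a (cns b (fam false 0 r))
  | false, (n+1), 0 => cns a (cns a (fam true n 0))
  | false, (n+1), (r+1) => cns a (cns a (fam true n (r+1))) + cns a (cns b (fam false (n+1) r))
  | true, n, 0 => cns b (cns b (fam false n 0))
  | true, n, (r+1) => cns b (cns b (fam false n (r+1))) + cns b (cns a (fam true n r))
  termination_by b n r => (n, r, if b then 1 else 0)

lemma fam_true_eq (n r : ℕ) : fam true n r =
    cns b (cns b (fam false n r)) + (if r = 0 then 0 else cns b (cns a (fam true n (r-1)))) := by
  cases r with
  | zero => rw [fam]; simp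
  | succ r' => rw [fam]; simp

lemma fam_false_succ (n r : ℕ) : fam false (n+1) r =
    cns a (cns a (fam true n r)) + (if r = 0 then 0 else cns a (cns b (fam false (n+1) (r-1)))) := by
  cases r with
  | zero => rw [fam]; simp
  | succ r' => rw [fam]; simp

lemma fam_Pa0 (r : ℕ) : fam false 0 r = Finsupp.single (abpow r) 1 := by
  induction r with
  | zero => rw [fam]; rfl
  | succ r' ih => rw [fam, ih, cns_single, cns_single]; rfl

/-- values of cns x F are values of F or zero -/
lemma cns_val (x : AB) (F : List AB →₀ ℚ) (w : List AB) :
    (cns x F) w = 0 ∨ ∃ u, w = x :: u ∧ (cns x F) w = F u := by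
  cases w with
  | nil => exact Or.inl (cns_apply_nil x F)
  | cons y u =>
    by_cases h : y = x
    · subst h; exact Or.inr ⟨u, rfl, cns_apply_cons _ _ _⟩
    · exact Or.inl (cns_apply_ne x y h F u)


def Ind (F : List AB →₀ ℚ) : Prop := ∀ w, F w = 0 ∨ F w = 1

lemma ind_cns (x : AB) {F : List AB →₀ ℚ} (h : Ind F) : Ind (cns x F) := by
  intro w
  rcases cns_val x F w with h0 | ⟨u, rfl, he⟩
  · exact Or.inl h0
  · rw [he]; exact h u

lemma disj2 (x x' y y' : AB) (h : y ≠ y') (F G : List AB →₀ ℚ) (w : List AB) :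
    (cns x (cns y F)) w = 0 ∨ (cns x' (cns y' G)) w = 0 := by
  rcases cns_val x (cns y F) w with h0 | ⟨u, rfl, he⟩
  · exact Or.inl h0
  rcases cns_val y F u with h0 | ⟨v, rfl, he'⟩
  · exact Or.inl (by rw [he, h0])
  right
  rcases cns_val x' (cns y' G) (x :: y :: v) with h0 | ⟨u', hu', he''⟩
  · exact h0
  · cases hu'
    rw [he'', cns_apply_ne _ _ h]

lemma ind_add2 {x x' y y' : AB} (h : y ≠ y') {F G : List AB →₀ ℚ}
    (hF : Ind F) (hG : Ind G) : Ind (cns x (cns y F) + cns x' (cns y' G)) := by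
  intro w
  rw [Finsupp.add_apply]
  rcases disj2 x x' y y' h F G w with h0 | h0
  · rw [h0, zero_add]; exact ind_cns x' (ind_cns y' hG) w
  · rw [h0, add_zero]; exact ind_cns x (ind_cns y hF) w

lemma mem_supp_add {F G : List AB →₀ ℚ} {w : List AB} (h : w ∈ (F + G).support) :
    w ∈ F.support ∨ w ∈ G.support := by
  have := Finsupp.support_add h
  simpa using this

lemma fam_ind : ∀ (p : Bool) (n r : ℕ), Ind (fam p n r) ∧
    (∀ w ∈ (fam p n r).support,
      if p then (∃ u, w = b :: u) ∧ countBB w = n + 1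
      else (w = [] ∨ ∃ u, w = a :: u) ∧ countBB w = n ∧ countBB (b :: w) = n) := by
  intro p n r
  induction p, n, r using fam.induct with
  | case1 =>
    rw [fam]
    constructor
    · intro w
      rw [Finsupp.single_apply]
      split <;> simp
    · intro w hw
      rw [Finsupp.support_single_ne_zero _ one_ne_zero] at hw
      simp only [Finset.mem_singleton] at hw
      subst hw
      simp [countBB]
  | case2 r ih =>
    obtain ⟨ih1, ih2⟩ := ih
    rw [fam]
    refine ⟨ind_cns _ (ind_cns _ ih1), ?_⟩
    intro w hw
    obtain ⟨u1, hu1, rfl⟩ := mem_supp_cns hw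
    obtain ⟨u, hu, rfl⟩ := mem_supp_cns hu1
    have h2 := ih2 u hu
    simp only [if_false, Bool.false_eq_true] at h2 ⊢
    obtain ⟨hsh, hc1, hc2⟩ := h2
    exact ⟨Or.inr ⟨_, rfl⟩, by rw [countBB_a]; exact hc2, by rw [countBB_ba]; exact hc2⟩
  | case3 n ih =>
    obtain ⟨ih1, ih2⟩ := ih
    rw [fam]
    refine ⟨ind_cns _ (ind_cns _ ih1), ?_⟩
    intro w hw
    obtain ⟨u1, hu1, rfl⟩ := mem_supp_cns hw
    obtain ⟨u, hu, rfl⟩ := mem_supp_cns hu1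
    have h2 := ih2 u hu
    simp only [if_true] at h2
    simp only [Bool.false_eq_true, if_false]
    obtain ⟨⟨v, rfl⟩, hc⟩ := h2
    refine ⟨Or.inr ⟨_, rfl⟩, ?_, ?_⟩
    · rw [countBB_a, countBB_a]; exact hc
    · rw [countBB_ba, countBB_a]; exact hc
  | case4 n r ih1' ih2' =>
    obtain ⟨ihA1, ihA2⟩ := ih1'
    obtain ⟨ihB1, ihB2⟩ := ih2'
    rw [fam]
    refine ⟨ind_add2 (by simp) ihA1 ihB1, ?_⟩
    intro w hw
    simp only [Bool.false_eq_true, if_false]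
    rcases mem_supp_add hw with hw' | hw'
    · obtain ⟨u1, hu1, rfl⟩ := mem_supp_cns hw'
      obtain ⟨u, hu, rfl⟩ := mem_supp_cns hu1
      have h2 := ihA2 u hu
      simp only [if_true] at h2
      obtain ⟨⟨v, rfl⟩, hc⟩ := h2
      refine ⟨Or.inr ⟨_, rfl⟩, ?_, ?_⟩
      · rw [countBB_a, countBB_a]; exact hc
      · rw [countBB_ba, countBB_a]; exact hc
    · obtain ⟨u1, hu1, rfl⟩ := mem_supp_cns hw'
      obtain ⟨u, hu, rfl⟩ := mem_supp_cns hu1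
      have h2 := ihB2 u hu
      simp only [Bool.false_eq_true, if_false] at h2
      obtain ⟨hsh, hc1, hc2⟩ := h2
      exact ⟨Or.inr ⟨_, rfl⟩, by rw [countBB_a]; exact hc2, by rw [countBB_ba]; exact hc2⟩
  | case5 n ih =>
    obtain ⟨ih1, ih2⟩ := ih
    rw [fam]
    refine ⟨ind_cns _ (ind_cns _ ih1), ?_⟩
    intro w hw
    obtain ⟨u1, hu1, rfl⟩ := mem_supp_cns hw
    obtain ⟨u, hu, rfl⟩ := mem_supp_cns hu1
    have h2 := ih2 u hu
    simp only [Bool.false_eq_true, if_false] at h2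
    obtain ⟨hsh, hc1, hc2⟩ := h2
    simp only [if_true]
    exact ⟨⟨_, rfl⟩, by rw [countBB_bb, hc2]⟩
  | case6 n r ihA' ihB' =>
    obtain ⟨ihA1, ihA2⟩ := ihA'
    obtain ⟨ihB1, ihB2⟩ := ihB'
    rw [fam]
    refine ⟨ind_add2 (by simp) ihA1 ihB1, ?_⟩
    intro w hw
    simp only [if_true]
    rcases mem_supp_add hw with hw' | hw'
    · obtain ⟨u1, hu1, rfl⟩ := mem_supp_cns hw'
      obtain ⟨u, hu, rfl⟩ := mem_supp_cns hu1
      have h2 := ihA2 u hu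
      simp only [Bool.false_eq_true, if_false] at h2
      obtain ⟨hsh, hc1, hc2⟩ := h2
      exact ⟨⟨_, rfl⟩, by rw [countBB_bb, hc2]⟩
    · obtain ⟨u1, hu1, rfl⟩ := mem_supp_cns hw'
      obtain ⟨u, hu, rfl⟩ := mem_supp_cns hu1
      have h2 := ihB2 u hu
      simp only [if_true] at h2
      obtain ⟨⟨v, rfl⟩, hc⟩ := h2
      exact ⟨⟨_, rfl⟩, by rw [countBB_ba, ← countBB_a]; exact hc⟩

def cq (k l n : ℕ) : ℚ := if n ≤ k ∧ n ≤ l then 2 * 4^(n-1) * ((k+l-2*n).choose (k-n)) else 0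
def dq (k l p : ℕ) : ℚ := if p ≤ k ∧ p ≤ l then 4^p * ((k+l-2*p).choose (k-p)) else 0

lemma cq_pascal (k l n : ℕ) (hn : 1 ≤ n) (h : 2*n < (k+1)+(l+1)) :
    cq (k+1) (l+1) n = cq k (l+1) n + cq (k+1) l n := by
  unfold cq
  by_cases h1 : n ≤ k <;> by_cases h2 : n ≤ l
  · rw [if_pos ⟨by omega, by omega⟩, if_pos ⟨h1, by omega⟩, if_pos ⟨by omega, h2⟩]
    have e1 : k+1+(l+1)-2*n = (k+(l+1)-2*n) + 1 := by omega
    have e2 : k+1-n = (k-n)+1 := by omega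
    have e4 : (k+1)+l-2*n = k + (l+1) - 2*n := by omega
    rw [e1, e2, Nat.choose_succ_succ, e4]
    push_cast
    ring
  · by_cases h3 : n ≤ l+1
    · have hnl : n = l+1 := by omega
      rw [if_pos ⟨by omega, h3⟩, if_pos ⟨h1, h3⟩, if_neg (by omega)]
      have e1 : k+1+(l+1)-2*n = k+1-n := by omega
      have e2 : k+(l+1)-2*n = k-n := by omega
      rw [e1, e2, Nat.choose_self, Nat.choose_self]
      ring
    · rw [if_neg (by omega), if_neg (by omega), if_neg (by omega)]; ring
  · by_cases h3 : n ≤ k+1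
    · have hnk : n = k+1 := by omega
      rw [if_pos ⟨h3, by omega⟩, if_neg (by omega), if_pos ⟨h3, h2⟩]
      have e1 : k+1-n = 0 := by omega
      rw [e1, Nat.choose_zero_right, Nat.choose_zero_right]
      ring
    · rw [if_neg (by omega), if_neg (by omega), if_neg (by omega)]; ring
  · rw [if_neg (by omega), if_neg (by omega), if_neg (by omega)]; ring

lemma cq_diag_zero (k l n : ℕ) (h : (k+1)+(l+1) ≤ 2*n) :
    cq k (l+1) n + cq (k+1) l n = 0 := by
  unfold cq
  rw [if_neg (by omega), if_neg (by omega)]; ring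

lemma dq_pascal (k l p : ℕ) (h : 2*p < (k+1)+(l+1)) :
    dq (k+1) (l+1) p = dq k (l+1) p + dq (k+1) l p := by
  unfold dq
  by_cases h1 : p ≤ k <;> by_cases h2 : p ≤ l
  · rw [if_pos ⟨by omega, by omega⟩, if_pos ⟨h1, by omega⟩, if_pos ⟨by omega, h2⟩]
    have e1 : k+1+(l+1)-2*p = (k+(l+1)-2*p) + 1 := by omega
    have e2 : k+1-p = (k-p)+1 := by omega
    have e4 : (k+1)+l-2*p = k + (l+1) - 2*p := by omega
    rw [e1, e2, Nat.choose_succ_succ, e4]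
    push_cast
    ring
  · by_cases h3 : p ≤ l+1
    · have hnl : p = l+1 := by omega
      rw [if_pos ⟨by omega, h3⟩, if_pos ⟨h1, h3⟩, if_neg (by omega)]
      have e1 : k+1+(l+1)-2*p = k+1-p := by omega
      have e2 : k+(l+1)-2*p = k-p := by omega
      rw [e1, e2, Nat.choose_self, Nat.choose_self]
      ring
    · rw [if_neg (by omega), if_neg (by omega), if_neg (by omega)]; ring
  · by_cases h3 : p ≤ k+1
    · have hnk : p = k+1 := by omega
      rw [if_pos ⟨h3, by omega⟩, if_neg (by omega), if_pos ⟨h3, h2⟩]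
      have e1 : k+1-p = 0 := by omega
      rw [e1, Nat.choose_zero_right, Nat.choose_zero_right]
      ring
    · rw [if_neg (by omega), if_neg (by omega), if_neg (by omega)]; ring
  · rw [if_neg (by omega), if_neg (by omega), if_neg (by omega)]; ring

lemma dq_diag_zero (k l p : ℕ) (h : (k+1)+(l+1) ≤ 2*p) :
    dq k (l+1) p + dq (k+1) l p = 0 := by
  unfold dq
  rw [if_neg (by omega), if_neg (by omega)]; ring

/-- `cq (p+1) = 2 * dq p` with both sides shifted. -/
lemma cq_succ_dq (k l p : ℕ) : cq (k+1) (l+1) (p+1) = 2 * dq k l p := by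
  unfold cq dq
  by_cases h : p ≤ k ∧ p ≤ l
  · rw [if_pos ⟨by omega, by omega⟩, if_pos h]
    have e1 : (k+1)+(l+1)-2*(p+1) = k+l-2*p := by omega
    have e2 : k+1-(p+1) = k-p := by omega
    have e3 : p+1-1 = p := by omega
    rw [e1, e2, e3]
    ring
  · rw [if_neg (by omega), if_neg h]; ring

lemma dq_two_cq (k l n : ℕ) (hn : 1 ≤ n) : dq k l n = 2 * cq k l n := by
  unfold cq dq
  by_cases h : n ≤ k ∧ n ≤ l
  · rw [if_pos h, if_pos h]
    have : 4^n = (4:ℚ)^(n-1) * 4 := by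
      rw [← pow_succ]
      congr 1
      omega
    rw [this]
    ring
  · rw [if_neg h, if_neg h]; ring

lemma cq_left_zero (l n : ℕ) (hn : 1 ≤ n) : cq 0 l n = 0 := by
  unfold cq; rw [if_neg (by omega)]

lemma dq_zero_left (l : ℕ) : dq 0 l 0 = 1 := by
  unfold dq; rw [if_pos ⟨le_refl 0, Nat.zero_le l⟩]; simp

lemma cq_top_zero (k l n : ℕ) (h : k + l < 2 * n) : cq k l n = 0 := by
  unfold cq; rw [if_neg (by omega)]

lemma cq_ne_zero (n mn j : ℕ) (h1 : 1 ≤ j) (hj : j ≤ n) (hnm : n ≤ mn) :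
    cq n mn j ≠ 0 := by
  unfold cq
  rw [if_pos ⟨hj, le_trans hj hnm⟩]
  have hpos : 0 < (n + mn - 2*j).choose (n - j) := by
    apply Nat.choose_pos
    omega
  positivity


lemma dq_left_pos_zero (l p : ℕ) (hp : 1 ≤ p) : dq 0 l p = 0 := by
  unfold dq; rw [if_neg (by omega)]

lemma dq_right_pos_zero (k p : ℕ) (hp : 1 ≤ p) : dq k 0 p = 0 := by
  unfold dq; rw [if_neg (by omega)]

lemma dq_k0 (k : ℕ) : dq k 0 0 = 1 := by
  unfold dq; rw [if_pos ⟨Nat.zero_le k, le_refl 0⟩]; simp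

def BBeq (k l : ℕ) : Prop :=
  shuffleWord (Bw k) (Bw l) =
    ∑ i ∈ Finset.range (k+l+2), cq (k+1) (l+1) (i+1) • fam true i (k+l-2*i)

def AAeq (k l : ℕ) : Prop :=
  shuffleWord (abpow k) (abpow l) =
    ∑ p ∈ Finset.range (k+l+1), dq k l p • fam false p (k+l-2*p)

lemma AA_base_left (l : ℕ) : AAeq 0 l := by
  unfold AAeq
  rw [abpow_zero, shuffle_nil_left]
  rw [Finset.sum_eq_single 0]
  · simp [dq_zero_left, fam_Pa0]
  · intro p _ hp
    rw [dq_left_pos_zero l p (by omega), zero_smul]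
  · intro h
    exact absurd (Finset.mem_range.mpr (by omega)) h

lemma AA_base_right (k : ℕ) : AAeq k 0 := by
  unfold AAeq
  rw [abpow_zero, shuffle_nil_right]
  rw [Finset.sum_eq_single 0]
  · simp [dq_k0, fam_Pa0]
  · intro p _ hp
    rw [dq_right_pos_zero k p (by omega), zero_smul]
  · intro h
    exact absurd (Finset.mem_range.mpr (by omega)) h

lemma fam_Pa0_succ (r : ℕ) : fam false 0 (r+1) = cns a (cns b (fam false 0 r)) := by
  rw [fam]

lemma key : ∀ N : ℕ, (∀ k l, 2*(k+l)+4 ≤ N → BBeq k l) ∧ (∀ k l, 2*(k+l)+1 ≤ N → AAeq k l) := by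
  intro N
  induction N with
  | zero => exact ⟨fun k l h => absurd h (by omega), fun k l h => absurd h (by omega)⟩
  | succ N ih =>
    constructor
    · -- BB statement
      intro k l h
      by_cases hN : 2*(k+l)+4 ≤ N
      · exact ih.1 k l hN
      have hAA : AAeq k l := ih.2 k l (by omega)
      -- term 2 : the bb part
      have hterm2 : (2:ℚ) • cns b (cns b (shuffleWord (abpow k) (abpow l))) =
          ∑ i ∈ Finset.range (k+l+2),
            cq (k+1) (l+1) (i+1) • cns b (cns b (fam false i (k+l-2*i))) := by
        rw [hAA, cns_sum, cns_sum, Finset.smul_sum, Finset.sum_range_succ _ (k+l+1),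
          cq_top_zero (k+1) (l+1) (k+l+2) (by omega), zero_smul, add_zero]
        refine Finset.sum_congr rfl (fun i _ => ?_)
        rw [cns_smul, cns_smul, cq_succ_dq, mul_smul]
      -- term 1 : the left ba part
      have hterm1 : (if k = 0 then 0 else cns b (cns a (shuffleWord (Bw (k-1)) (Bw l)))) =
          ∑ i ∈ Finset.range (k+l+1),
            cq k (l+1) (i+1) • cns b (cns a (fam true i (k+l-1-2*i))) := by
        cases k with
        | zero =>
          rw [if_pos rfl]
          symm
          refine Finset.sum_eq_zero (fun i _ => ?_)
          rw [cq_left_zero (l+1) (i+1) (by omega), zero_smul]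
        | succ k' =>
          rw [if_neg (Nat.succ_ne_zero k'), Nat.add_sub_cancel]
          have hBB' : BBeq k' l := ih.1 k' l (by omega)
          rw [hBB', cns_sum, cns_sum]
          refine Finset.sum_congr (by congr 1 <;> omega) (fun i _ => ?_)
          rw [cns_smul, cns_smul]
          have e : k'+1+l-1-2*i = k'+l-2*i := by omega
          rw [e]
      have hterm1' : (if l = 0 then 0 else cns b (cns a (shuffleWord (Bw k) (Bw (l-1))))) =
          ∑ i ∈ Finset.range (k+l+1),
            cq (k+1) l (i+1) • cns b (cns a (fam true i (k+l-1-2*i))) := by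
        cases l with
        | zero =>
          rw [if_pos rfl]
          symm
          refine Finset.sum_eq_zero (fun i _ => ?_)
          have : cq (k+1) 0 (i+1) = 0 := by unfold cq; rw [if_neg (by omega)]
          rw [this, zero_smul]
        | succ l' =>
          rw [if_neg (Nat.succ_ne_zero l'), Nat.add_sub_cancel]
          have hBB' : BBeq k l' := ih.1 k l' (by omega)
          rw [hBB', cns_sum, cns_sum]
          refine Finset.sum_congr (by congr 1 <;> omega) (fun i _ => ?_)
          rw [cns_smul, cns_smul]
          have e : k+(l'+1)-1-2*i = k+l'-2*i := by omega
          rw [e]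
      unfold BBeq
      rw [masterBB k l, hterm1, hterm1', hterm2]
      have expand : ∀ i ∈ Finset.range (k+l+2),
          cq (k+1) (l+1) (i+1) • fam true i (k+l-2*i) =
          cq (k+1) (l+1) (i+1) •
            (if k+l-2*i = 0 then 0 else cns b (cns a (fam true i (k+l-2*i-1)))) +
          cq (k+1) (l+1) (i+1) • cns b (cns b (fam false i (k+l-2*i))) := by
        intro i _
        rw [fam_true_eq, smul_add, add_comm]
      rw [Finset.sum_congr rfl expand, Finset.sum_add_distrib]
      congr 1
      symm
      rw [Finset.sum_range_succ _ (k+l+1),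
        if_pos (show k+l-2*(k+l+1) = 0 by omega), smul_zero, add_zero,
        ← Finset.sum_add_distrib]
      refine Finset.sum_congr rfl (fun i _ => ?_)
      rw [← add_smul]
      by_cases hz : k+l-2*i = 0
      · rw [if_pos hz, smul_zero]
        have : cq k (l+1) (i+1) + cq (k+1) l (i+1) = 0 := cq_diag_zero k l (i+1) (by omega)
        rw [this, zero_smul]
      · rw [if_neg hz, cq_pascal k l (i+1) (by omega) (by omega)]
        have e : k+l-2*i-1 = k+l-1-2*i := by omega
        rw [e]
    · -- AA statement
      intro k l h
      by_cases hN : 2*(k+l)+1 ≤ N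
      · exact ih.2 k l hN
      cases k with
      | zero => exact AA_base_left l
      | succ k' =>
        cases l with
        | zero => exact AA_base_right (k'+1)
        | succ l' =>
          have hBB : BBeq k' l' := ih.1 k' l' (by omega)
          have hAA1 : AAeq k' (l'+1) := ih.2 k' (l'+1) (by omega)
          have hAA2 : AAeq (k'+1) l' := ih.2 (k'+1) l' (by omega)
          unfold AAeq
          rw [masterAA k' l']
          have target_eq : ∑ p ∈ Finset.range (k'+1+(l'+1)+1), dq (k'+1) (l'+1) p •
              fam false p (k'+1+(l'+1)-2*p) =
              (∑ i ∈ Finset.range (k'+l'+2), dq (k'+1) (l'+1) (i+1) •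
                ((if k'+l'-2*i = 0 then 0 else
                    cns a (cns b (fam false (i+1) (k'+l'-2*i-1)))) +
                 cns a (cns a (fam true i (k'+l'-2*i))))) +
              dq (k'+1) (l'+1) 0 • cns a (cns b (fam false 0 (k'+l'+1))) := by
            have hr : k'+1+(l'+1)+1 = (k'+l'+2)+1 := by omega
            rw [Finset.sum_congr (by rw [hr]) (fun p _ => rfl), Finset.sum_range_succ']
            congr 1
            · refine Finset.sum_congr rfl (fun i _ => ?_)
              have e : k'+1+(l'+1)-2*(i+1) = k'+l'-2*i := by omega
              rw [e, fam_false_succ, add_comm (cns a (cns a (fam true i (k'+l'-2*i))))]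
            · have e : k'+1+(l'+1)-2*0 = (k'+l'+1)+1 := by omega
              rw [e, fam_Pa0_succ]
          rw [target_eq, Finset.sum_congr rfl
            (fun i _ => smul_add (dq (k'+1) (l'+1) (i+1)) _ _), Finset.sum_add_distrib]
          have haa : (2:ℚ) • cns a (cns a (shuffleWord (Bw k') (Bw l'))) =
              ∑ i ∈ Finset.range (k'+l'+2), dq (k'+1) (l'+1) (i+1) •
                cns a (cns a (fam true i (k'+l'-2*i))) := by
            rw [hBB, cns_sum, cns_sum, Finset.smul_sum]
            refine Finset.sum_congr rfl (fun i _ => ?_)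
            rw [cns_smul, cns_smul, dq_two_cq (k'+1) (l'+1) (i+1) (by omega), mul_smul]
          have hab : cns a (cns b (shuffleWord (abpow k') (abpow (l'+1)))) +
              cns a (cns b (shuffleWord (abpow (k'+1)) (abpow l'))) =
              (∑ i ∈ Finset.range (k'+l'+2), dq (k'+1) (l'+1) (i+1) •
                (if k'+l'-2*i = 0 then 0 else
                  cns a (cns b (fam false (i+1) (k'+l'-2*i-1))))) +
              dq (k'+1) (l'+1) 0 • cns a (cns b (fam false 0 (k'+l'+1))) := by
            rw [hAA1, hAA2, cns_sum, cns_sum, cns_sum, cns_sum]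
            have e1 : ∀ i ∈ Finset.range (k'+(l'+1)+1),
                cns a (cns b (dq k' (l'+1) i • fam false i (k'+(l'+1)-2*i))) =
                dq k' (l'+1) i • cns a (cns b (fam false i (k'+l'+1-2*i))) := by
              intro i _
              rw [cns_smul, cns_smul]
              have e : k'+(l'+1)-2*i = k'+l'+1-2*i := by omega
              rw [e]
            have e2 : ∀ i ∈ Finset.range (k'+1+l'+1),
                cns a (cns b (dq (k'+1) l' i • fam false i (k'+1+l'-2*i))) =
                dq (k'+1) l' i • cns a (cns b (fam false i (k'+l'+1-2*i))) := by
              intro i _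
              rw [cns_smul, cns_smul]
              have e : k'+1+l'-2*i = k'+l'+1-2*i := by omega
              rw [e]
            rw [Finset.sum_congr rfl e1, Finset.sum_congr rfl e2,
              Finset.sum_congr (show Finset.range (k'+(l'+1)+1) = Finset.range ((k'+l'+1)+1)
                by congr 1 <;> omega) (fun i _ => rfl),
              Finset.sum_congr (show Finset.range (k'+1+l'+1) = Finset.range ((k'+l'+1)+1)
                by congr 1 <;> omega) (fun i _ => rfl),
              ← Finset.sum_add_distrib]
            rw [Finset.sum_congr rfl (fun i _ =>
              (add_smul (dq k' (l'+1) i) (dq (k'+1) l' i)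
                (cns a (cns b (fam false i (k'+l'+1-2*i))))).symm)]
            rw [Finset.sum_range_succ']
            congr 1
            · symm
              rw [Finset.sum_range_succ _ (k'+l'+1),
                if_pos (show k'+l'-2*(k'+l'+1) = 0 by omega), smul_zero, add_zero]
              refine Finset.sum_congr rfl (fun i _ => ?_)
              by_cases hz : k'+l'-2*i = 0
              · rw [if_pos hz, smul_zero]
                have : dq k' (l'+1) (i+1) + dq (k'+1) l' (i+1) = 0 :=
                  dq_diag_zero k' l' (i+1) (by omega)
                rw [this, zero_smul]
              · rw [if_neg hz, dq_pascal k' l' (i+1) (by omega)]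
                have e : k'+l'-2*i-1 = k'+l'+1-2*(i+1) := by omega
                rw [e]
            · have e : k'+l'+1-2*0 = k'+l'+1 := by omega
              rw [e, dq_pascal k' l' 0 (by omega)]
          rw [haa, hab]
          abel

/-! ### Identification of `U` with the word families -/

lemma keyBB_clean (k l m : ℕ) (hk : 1 ≤ k) (hl : k + 1 ≤ m) (hm : l = m - k) :
    shuffleWord (AB.b :: abpow (k-1)) (AB.b :: abpow (m-k-1)) =
      ∑ i ∈ Finset.range m, cq k (m-k) (i+1) • fam true i (m-2-2*i) := by
  subst hm
  have h := (key (2*((k-1)+(m-k-1))+4)).1 (k-1) (m-k-1) le_rfl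
  unfold BBeq at h
  have e0 : (AB.b :: abpow (k-1)) = Bw (k-1) := rfl
  have e1 : (AB.b :: abpow (m-k-1)) = Bw (m-k-1) := rfl
  rw [e0, e1, h]
  refine Finset.sum_congr (by congr 1 <;> omega) (fun i _ => ?_)
  have e2 : k-1+1 = k := by omega
  have e3 : m-k-1+1 = m-k := by omega
  have e4 : k-1+(m-k-1)-2*i = m-2-2*i := by omega
  rw [e2, e3, e4]

lemma sum_single_support {F : List AB →₀ ℚ} (h : Ind F) :
    ∑ w ∈ F.support, Finsupp.single w (1:ℚ) = F := by
  conv_rhs => rw [← Finsupp.sum_single F]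
  rw [Finsupp.sum]
  refine Finset.sum_congr rfl (fun w hw => ?_)
  rcases h w with h0 | h1
  · exact absurd h0 (Finsupp.mem_support_iff.mp hw)
  · rw [h1]

lemma U_eq (m n : ℕ) (h1 : 1 ≤ n) (h2 : 2*n ≤ m) :
    U m n = fam true (n-1) (m-2*n) := by
  unfold U
  rw [if_pos ⟨h1, by omega⟩]
  have hS := keyBB_clean n (m-n) m h1 (by omega) rfl
  have hval : ∀ w, countBB w = n →
      shuffleWord (AB.b :: abpow (n-1)) (AB.b :: abpow (m-n-1)) w =
        cq n (m-n) n * (fam true (n-1) (m-2*n)) w := by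
    intro w hw
    rw [hS, Finsupp.finset_sum_apply]
    rw [Finset.sum_eq_single (n-1)]
    · rw [Finsupp.smul_apply]
      have e : m-2-2*(n-1) = m-2*n := by omega
      have e2 : n-1+1 = n := by omega
      rw [e, e2, smul_eq_mul]
    · intro i _ hi
      rw [Finsupp.smul_apply]
      have : (fam true i (m-2-2*i)) w = 0 := by
        by_contra hne
        have hm := (fam_ind true i (m-2-2*i)).2 w (Finsupp.mem_support_iff.mpr hne)
        simp only [if_true] at hm
        omega
      rw [this, smul_zero]
    · intro hmem
      exact absurd (Finset.mem_range.mpr (by omega)) hmem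
  have hsupp : (shuffleWord (AB.b :: abpow (n-1)) (AB.b :: abpow (m-n-1))).support.filter
      (fun w => countBB w = n) = (fam true (n-1) (m-2*n)).support := by
    ext w
    simp only [Finset.mem_filter, Finsupp.mem_support_iff]
    constructor
    · rintro ⟨hne, hcb⟩
      rw [hval w hcb] at hne
      intro h0
      rw [h0, mul_zero] at hne
      exact hne rfl
    · intro hne
      have hcb : countBB w = n := by
        have hm := (fam_ind true (n-1) (m-2*n)).2 w (Finsupp.mem_support_iff.mpr hne)
        simp only [if_true] at hm
        omega
      refine ⟨?_, hcb⟩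
      rw [hval w hcb]
      exact mul_ne_zero (cq_ne_zero n (m-n) n h1 le_rfl (by omega)) hne
  rw [hsupp]
  exact sum_single_support (fam_ind true (n-1) (m-2*n)).1


/-- The generic summand of both sides. -/
noncomputable def Tm (m k i : ℕ) : (ℕ × ℕ) →₀ (List AB →₀ ℚ) :=
  Finsupp.single (k, m-k) (cq k (m-k) (i+1) • fam true i (m-2-2*i))

lemma Tm_zero_of_lt (m k i : ℕ) (h : ¬((i+1) ≤ k ∧ (i+1) ≤ m-k)) : Tm m k i = 0 := by
  unfold Tm cq
  rw [if_neg h, zero_smul, Finsupp.single_zero]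

/-- **Proposition (umbral shuffle convolution, `U` form).**  Let `x_0, x_1, …`
and `y_0, y_1, …` be sequences of (not necessarily commuting) indeterminates
commuting with words over `{a,b}`.  The monomial `x_i y_j` paired bilinearly
with a polynomial `s` in the words is encoded as `Finsupp.single (i, j) s` in
`(ℕ × ℕ) →₀ Sh_ℚ[{a,b}]`.  For every positive integer `m`,
`Σ_{k=1}^{m-1} x_k y_{m-k} [b(ab)^{k-1} ⧢ b(ab)^{m-k-1}]
  = (1/2) Σ_{n=1}^{⌊m/2⌋} 4^n Σ_{j=0}^{m-2n} binom(m-2n, j) x_{n+j} y_{m-n-j} U_{m,n}`. -/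
theorem umbral_shuffle_U (m : ℕ) (hm : 0 < m) :
    (∑ k ∈ Finset.Icc 1 (m - 1),
      Finsupp.single ((k, m - k) : ℕ × ℕ)
        (shuffleWord (AB.b :: abpow (k - 1)) (AB.b :: abpow (m - k - 1)))) =
    (2⁻¹ : ℚ) • ∑ n ∈ Finset.Icc 1 (m / 2), (4 : ℚ) ^ n •
      ∑ j ∈ Finset.range (m - 2 * n + 1),
        ((m - 2 * n).choose j : ℚ) •
          Finsupp.single ((n + j, m - n - j) : ℕ × ℕ) (U m n) := by
  have hL : ∀ k ∈ Finset.Icc 1 (m-1),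
      Finsupp.single ((k, m - k) : ℕ × ℕ)
        (shuffleWord (AB.b :: abpow (k - 1)) (AB.b :: abpow (m - k - 1))) =
      ∑ i ∈ Finset.range m, Tm m k i := by
    intro k hk
    rw [Finset.mem_Icc] at hk
    rw [keyBB_clean k (m-k) m hk.1 (by omega) rfl]
    rw [Finsupp.single_finset_sum]
    rfl
  rw [Finset.sum_congr rfl hL]
  rw [Finset.sum_congr rfl (fun n _ =>
    (Finset.smul_sum : (4:ℚ)^n • _ = _))]
  have hR1 : ∀ n ∈ Finset.Icc 1 (m/2), ∀ j ∈ Finset.range (m - 2*n + 1),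
      (4:ℚ)^n • (((m - 2 * n).choose j : ℚ) •
        Finsupp.single ((n + j, m - n - j) : ℕ × ℕ) (U m n)) =
      (2 : ℚ) • Tm m (n+j) (n-1) := by
    intro n hn j hj
    rw [Finset.mem_Icc] at hn
    rw [Finset.mem_range] at hj
    have h2n : 2*n ≤ m := by
      have := hn.2
      omega
    rw [U_eq m n hn.1 h2n]
    unfold Tm
    have e1 : m - n - j = m - (n+j) := by omega
    have e2 : m-2-2*(n-1) = m - 2*n := by omega
    have e3 : n-1+1 = n := by omega
    have e4 : cq (n+j) (m-(n+j)) n = 2 * 4^(n-1) * ((m - 2*n).choose j : ℚ) := by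
      unfold cq
      rw [if_pos ⟨by omega, by omega⟩]
      have e5 : (n+j) + (m-(n+j)) - 2*n = m - 2*n := by omega
      have e6 : n+j-n = j := by omega
      rw [e5, e6]
    rw [e1, e2, e3, e4, Finsupp.smul_single, Finsupp.smul_single, Finsupp.smul_single,
      smul_smul, smul_smul]
    congr 1
    have e7 : (4:ℚ)^n = 4 * 4^(n-1) := by
      conv_lhs => rw [show n = (n-1)+1 by omega]
      rw [pow_succ]
      ring
    rw [e7]
    ring
  rw [Finset.sum_congr rfl (fun n hn => Finset.sum_congr rfl (fun j hj => hR1 n hn j hj))]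
  have hR2 : ∀ n ∈ Finset.Icc 1 (m/2),
      ∑ j ∈ Finset.range (m - 2*n + 1), (2:ℚ) • Tm m (n+j) (n-1) =
      ∑ k ∈ Finset.Icc 1 (m-1), (2:ℚ) • Tm m k (n-1) := by
    intro n hn
    rw [Finset.mem_Icc] at hn
    have h2n : 2*n ≤ m := by
      have := hn.2
      omega
    rw [← Finset.sum_subset (Finset.Icc_subset_Icc (by omega) (by omega) :
      Finset.Icc n (m-n) ⊆ Finset.Icc 1 (m-1))]
    · apply Finset.sum_nbij' (i := fun j => n + j) (j := fun k => k - n)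
      · intro j hj
        rw [Finset.mem_range] at hj
        rw [Finset.mem_Icc]
        omega
      · intro k hk
        rw [Finset.mem_Icc] at hk
        rw [Finset.mem_range]
        omega
      · intro j hj
        rw [Finset.mem_range] at hj
        omega
      · intro k hk
        rw [Finset.mem_Icc] at hk
        omega
      · intro j hj
        rfl
    · intro k hk hk2
      rw [Finset.mem_Icc] at hk
      rw [Finset.mem_Icc] at hk2
      rw [Tm_zero_of_lt m k (n-1) (by omega), smul_zero]
  rw [Finset.sum_congr rfl hR2]
  have hR3 : ∑ n ∈ Finset.Icc 1 (m/2), ∑ k ∈ Finset.Icc 1 (m-1), (2:ℚ) • Tm m k (n-1) =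
      ∑ n ∈ Finset.Icc 1 m, ∑ k ∈ Finset.Icc 1 (m-1), (2:ℚ) • Tm m k (n-1) := by
    apply Finset.sum_subset (Finset.Icc_subset_Icc le_rfl (by omega))
    intro n hn hn2
    rw [Finset.mem_Icc] at hn
    rw [Finset.mem_Icc] at hn2
    refine Finset.sum_eq_zero (fun k hk => ?_)
    rw [Finset.mem_Icc] at hk
    rw [Tm_zero_of_lt m k (n-1) (by omega), smul_zero]
  rw [hR3]
  have hR4 : ∑ n ∈ Finset.Icc 1 m, ∑ k ∈ Finset.Icc 1 (m-1), (2:ℚ) • Tm m k (n-1) =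
      ∑ i ∈ Finset.range m, ∑ k ∈ Finset.Icc 1 (m-1), (2:ℚ) • Tm m k i := by
    rw [← Finset.Ico_add_one_right_eq_Icc, Finset.sum_Ico_eq_sum_range]
    refine Finset.sum_congr (by congr 1 <;> omega) (fun i _ => ?_)
    refine Finset.sum_congr rfl (fun k _ => ?_)
    congr 2
    omega
  rw [hR4]
  have final : (2⁻¹ : ℚ) • ∑ i ∈ Finset.range m, ∑ k ∈ Finset.Icc 1 (m-1), (2:ℚ) • Tm m k i =
      ∑ i ∈ Finset.range m, ∑ k ∈ Finset.Icc 1 (m-1), Tm m k i := by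
    rw [Finset.smul_sum]
    refine Finset.sum_congr rfl (fun i _ => ?_)
    rw [Finset.smul_sum]
    refine Finset.sum_congr rfl (fun k _ => ?_)
    rw [smul_smul]
    norm_num
  rw [final]
  exact Finset.sum_comm
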